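/- Let r > 0, p ≥ 1, m ∈ ℕ, let E = ℝ^m with the Euclidean inner product, K and E₁ finite-dimensional real inner product spaces, T : E → K and A : E → E₁ linear maps, g ∈ K, f ∈ E₁, γ > 0, and F = {v ∈ E : Av = f}. Let (ε_n) be a sequence in (0, r) with ε_n → 0 and, for each n, let v_n be a minimizer over F of J_p^{ε_n}(v) = ‖Tv − g‖² + γ ∑_{i=1}^m W_r^{p,ε_n}(v_i). If v_n converges to some v* ∈ E, then v* is a minimizer over F of J_p(v) = ‖Tv − g‖² + γ ∑_{i=1}^m min{|v_i|^p, r^p}. -/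

import Mathlib

/-!
The smoothed potential differs from the truncated power `min (|t|^p) (r^p)` by at most
`2 p r^(p-1) ε`, uniformly in `t`: on the transition zone `π_p` is `r^p` plus a cubic bump of
size at most `p (r-ε)^(p-1) ε` minus a cubic step of size at most `r^p - (r-ε)^p ≤ p r^(p-1) ε`.
Hence `J_p^{ε_n} → J_p` uniformly on `E`, and a limit of minimizers of uniformly convergent
functionals over a closed set minimizes the continuous limit functional.
-/

/-- The smoothed truncated power potential `W_r^{p,ε}`. -/
noncomputable def Wpot (r p ε t : ℝ) : ℝ :=
  if |t| ≤ r - ε then |t| ^ p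
  else if |t| ≤ r + ε then
    (p * (r - ε) ^ (p - 1) / (12 * ε ^ 2) +
        (p * (r - ε) ^ (p - 1) / (2 * ε) +
          3 * ((r - ε) ^ p - r ^ p) / (4 * ε ^ 2)) / (3 * ε)) *
      (|t| - (r + ε)) ^ 3 +
    (p * (r - ε) ^ (p - 1) / (2 * ε) + 3 * ((r - ε) ^ p - r ^ p) / (4 * ε ^ 2)) *
      (|t| - (r + ε)) ^ 2 + r ^ p
  else r ^ p

open Filter Topology

lemma rpow_sub_rpow_le_mul {a b p : ℝ} (hp : 1 ≤ p) (ha : 0 ≤ a) (hab : a ≤ b) :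
    b ^ p - a ^ p ≤ p * b ^ (p - 1) * (b - a) := by
  obtain rfl | hb := (ha.trans hab).eq_or_lt
  · obtain rfl : a = 0 := le_antisymm hab ha
    simp
  have hbernoulli := one_add_mul_self_le_rpow_one_add
    (by rw [neg_le_neg_iff]; exact div_le_one_of_le₀ (by linarith) hb.le : -1 ≤ -((b - a) / b)) hp
  have hbase : 1 + -((b - a) / b) = a / b := by field_simp; ring
  rw [hbase, Real.div_rpow ha hb.le, le_div_iff₀ (by positivity)] at hbernoulli
  have hsplit : b ^ p = b ^ (p - 1) * b := by
    rw [← Real.rpow_add_one hb.ne']; ring_nf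
  rw [hsplit] at hbernoulli ⊢
  field_simp at hbernoulli
  nlinarith

section SmoothedPotential

variable {r p ε : ℝ}

lemma Wpot_of_lt_of_le (hε : ε ≠ 0) {t : ℝ} (h₁ : r - ε < |t|) (h₂ : |t| ≤ r + ε) :
    let u := (r + ε - |t|) / (2 * ε)
    Wpot r p ε t = r ^ p + p * (r - ε) ^ (p - 1) * ε * (2 * u ^ 2 * (1 - u)) -
      (r ^ p - (r - ε) ^ p) * (u ^ 2 * (3 - 2 * u)) := by
  simp only [Wpot, if_neg h₁.not_ge, if_pos h₂]
  field_simp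
  ring

lemma abs_Wpot_sub_min_le (hp : 1 ≤ p) (hε : 0 < ε) (hεr : ε ≤ r) (t : ℝ) :
    |Wpot r p ε t - min (|t| ^ p) (r ^ p)| ≤ 2 * (p * r ^ (p - 1) * ε) := by
  have hp₀ : 0 ≤ p := by linarith
  have hr : 0 < r := hε.trans_le hεr
  have hrε : 0 ≤ r - ε := by linarith
  have hM : 0 ≤ p * r ^ (p - 1) * ε := by positivity
  rcases le_or_gt |t| (r - ε) with h₁ | h₁
  · have : |t| ^ p ≤ r ^ p := Real.rpow_le_rpow (abs_nonneg t) (by linarith) hp₀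
    simpa [Wpot, h₁, this] using hM
  rcases le_or_gt |t| (r + ε) with h₂ | h₂
  swap
  · have : r ^ p ≤ |t| ^ p := Real.rpow_le_rpow hr.le (by linarith) hp₀
    simpa [Wpot, h₁.not_ge, h₂.not_ge, this] using hM
  rw [Wpot_of_lt_of_le hε.ne' h₁ h₂]
  set u := (r + ε - |t|) / (2 * ε)
  have hu₀ : 0 ≤ u := div_nonneg (by linarith) (by positivity)
  have hu₁ : u ≤ 1 := (div_le_one (by positivity)).2 (by linarith)
  have hbump₀ : 0 ≤ 2 * u ^ 2 * (1 - u) := by have := sub_nonneg.2 hu₁; positivity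
  have hbump₁ : 2 * u ^ 2 * (1 - u) ≤ 1 := by nlinarith [mul_nonneg hu₀ (sub_nonneg.2 hu₁)]
  have hstep₀ : 0 ≤ u ^ 2 * (3 - 2 * u) := mul_nonneg (sq_nonneg u) (by linarith)
  have hstep₁ : u ^ 2 * (3 - 2 * u) ≤ 1 := by nlinarith [mul_nonneg (sq_nonneg (1 - u)) hu₀]
  have hB₀ : 0 ≤ p * (r - ε) ^ (p - 1) * ε := by positivity
  have hB : p * (r - ε) ^ (p - 1) * ε ≤ p * r ^ (p - 1) * ε := by
    gcongr
    linarith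
  have hD₀ : 0 ≤ r ^ p - (r - ε) ^ p := sub_nonneg.2 (Real.rpow_le_rpow hrε (by linarith) hp₀)
  have hD : r ^ p - (r - ε) ^ p ≤ p * r ^ (p - 1) * ε := by
    simpa using rpow_sub_rpow_le_mul hp hrε (by linarith : r - ε ≤ r)
  have hmin : (r - ε) ^ p ≤ min (|t| ^ p) (r ^ p) :=
    le_min (Real.rpow_le_rpow hrε h₁.le hp₀) (Real.rpow_le_rpow hrε (by linarith) hp₀)
  have := min_le_right (|t| ^ p) (r ^ p)
  have := mul_nonneg hB₀ hbump₀
  have := mul_le_of_le_one_right hB₀ hbump₁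
  have := mul_nonneg hD₀ hstep₀
  have := mul_le_of_le_one_right hD₀ hstep₁
  rw [abs_le]
  constructor <;> linarith

lemma abs_sum_Wpot_sub_sum_min_le {ι : Type*} [Fintype ι] (hp : 1 ≤ p) (hε : 0 < ε)
    (hεr : ε ≤ r) (w : ι → ℝ) :
    |∑ i, Wpot r p ε (w i) - ∑ i, min (|w i| ^ p) (r ^ p)| ≤
      Fintype.card ι * (2 * (p * r ^ (p - 1) * ε)) := by
  rw [← Finset.sum_sub_distrib]
  calc |∑ i, (Wpot r p ε (w i) - min (|w i| ^ p) (r ^ p))|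
      ≤ ∑ i, |Wpot r p ε (w i) - min (|w i| ^ p) (r ^ p)| := Finset.abs_sum_le_sum_abs _ _
    _ ≤ ∑ _i : ι, 2 * (p * r ^ (p - 1) * ε) := by
      gcongr with i
      exact abs_Wpot_sub_min_le hp hε hεr _
    _ = Fintype.card ι * (2 * (p * r ^ (p - 1) * ε)) := by
      rw [Finset.sum_const, Finset.card_univ, nsmul_eq_mul]

end SmoothedPotential

lemma tendstoUniformly_of_dist_le {ι X α : Type*} [PseudoMetricSpace α] {l : Filter ι}
    {F : ι → X → α} {f : X → α} {b : ι → ℝ} (hb : Tendsto b l (𝓝 0))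
    (hdist : ∀ n x, dist (F n x) (f x) ≤ b n) : TendstoUniformly F f l :=
  Metric.tendstoUniformly_iff.2 fun _ hδ =>
    (hb.eventually (gt_mem_nhds hδ)).mono fun n hn x => dist_comm (F n x) (f x) ▸ (hdist n x).trans_lt hn

lemma isMinOn_of_tendstoUniformly {ι X β : Type*} [TopologicalSpace X] [UniformSpace β]
    [Preorder β] [OrderClosedTopology β] {l : Filter ι} [l.NeBot] {S : Set X} (hS : IsClosed S)
    {F : ι → X → β} {J : X → β} (hF : TendstoUniformly F J l) {x : ι → X} {x₀ : X}
    (hJ : ContinuousAt J x₀) (hx : Tendsto x l (𝓝 x₀)) (hxS : ∀ᶠ n in l, x n ∈ S)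
    (hmin : ∀ᶠ n in l, IsMinOn (F n) S (x n)) : x₀ ∈ S ∧ IsMinOn J S x₀ :=
  ⟨hS.mem_of_tendsto hx hxS, fun v hv => le_of_tendsto_of_tendsto (hF.tendsto_comp hJ hx)
    (hF.tendsto_at v) (hmin.mono fun _ hn => hn hv)⟩

theorem statement9_general (r p : ℝ) (hp : 1 ≤ p) (m : ℕ)
    {K E₁ : Type*}
    [NormedAddCommGroup K] [InnerProductSpace ℝ K]
    [NormedAddCommGroup E₁] [InnerProductSpace ℝ E₁]
    (T : EuclideanSpace ℝ (Fin m) →ₗ[ℝ] K) (A : EuclideanSpace ℝ (Fin m) →ₗ[ℝ] E₁)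
    (g : K) (f : E₁) (γ : ℝ) (hγ : 0 < γ)
    (εseq : ℕ → ℝ) (hεpos : ∀ n, 0 < εseq n) (hεlt : ∀ n, εseq n < r)
    (hεto0 : Filter.Tendsto εseq Filter.atTop (nhds 0))
    (vn : ℕ → EuclideanSpace ℝ (Fin m))
    (hvnf : ∀ n, A (vn n) = f)
    (hvnmin : ∀ n, ∀ v : EuclideanSpace ℝ (Fin m), A v = f →
      ‖T (vn n) - g‖ ^ 2 + γ * ∑ i, Wpot r p (εseq n) (vn n i) ≤
        ‖T v - g‖ ^ 2 + γ * ∑ i, Wpot r p (εseq n) (v i))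
    (vstar : EuclideanSpace ℝ (Fin m))
    (hconv : Filter.Tendsto vn Filter.atTop (nhds vstar)) :
    A vstar = f ∧
      ∀ v : EuclideanSpace ℝ (Fin m), A v = f →
        ‖T vstar - g‖ ^ 2 + γ * ∑ i, min (|vstar i| ^ p) (r ^ p) ≤
          ‖T v - g‖ ^ 2 + γ * ∑ i, min (|v i| ^ p) (r ^ p) := by
  set J : EuclideanSpace ℝ (Fin m) → ℝ := fun w => ‖T w - g‖ ^ 2 + γ * ∑ i, min (|w i| ^ p) (r ^ p)
  have hS : IsClosed {v | A v = f} := isClosed_eq A.continuous_of_finiteDimensional continuous_const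
  have hJ : Continuous J := by
    have hp₀ : 0 ≤ p := by linarith
    fun_prop (disch := intros; exact Or.inr hp₀)
  set C := γ * (m * (2 * (p * r ^ (p - 1))))
  have hunif : TendstoUniformly
      (fun n w => ‖T w - g‖ ^ 2 + γ * ∑ i, Wpot r p (εseq n) (w i)) J atTop := by
    refine tendstoUniformly_of_dist_le (b := fun n => C * εseq n)
      (by simpa using hεto0.const_mul C) fun n w => ?_
    rw [Real.dist_eq, add_sub_add_left_eq_sub, ← mul_sub, abs_mul, abs_of_pos hγ]
    have := abs_sum_Wpot_sub_sum_min_le hp (hεpos n) (hεlt n).le w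
    rw [Fintype.card_fin] at this
    calc γ * _ ≤ γ * (m * (2 * (p * r ^ (p - 1) * εseq n))) := by gcongr
      _ = C * εseq n := by ring
  obtain ⟨hf, hmin⟩ := isMinOn_of_tendstoUniformly hS hunif hJ.continuousAt hconv
    (Eventually.of_forall hvnf) (Eventually.of_forall fun n v hv => hvnmin n v hv)
  exact ⟨hf, fun v hv => hmin hv⟩

/-- If `ε_n → 0`, `v_n` minimizes `J_p^{ε_n}` over `F = {Av = f}`, and
`v_n → v*`, then `v*` minimizes `J_p(v) = ‖Tv − g‖² + γ ∑ᵢ min{|vᵢ|^p, r^p}` over `F`. -/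
theorem statement9 (r p : ℝ) (hr : 0 < r) (hp : 1 ≤ p) (m : ℕ)
    {K E₁ : Type*}
    [NormedAddCommGroup K] [InnerProductSpace ℝ K] [FiniteDimensional ℝ K]
    [NormedAddCommGroup E₁] [InnerProductSpace ℝ E₁] [FiniteDimensional ℝ E₁]
    (T : EuclideanSpace ℝ (Fin m) →ₗ[ℝ] K) (A : EuclideanSpace ℝ (Fin m) →ₗ[ℝ] E₁)
    (g : K) (f : E₁) (γ : ℝ) (hγ : 0 < γ)
    (εseq : ℕ → ℝ) (hεpos : ∀ n, 0 < εseq n) (hεlt : ∀ n, εseq n < r)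
    (hεto0 : Filter.Tendsto εseq Filter.atTop (nhds 0))
    (vn : ℕ → EuclideanSpace ℝ (Fin m))
    (hvnf : ∀ n, A (vn n) = f)
    (hvnmin : ∀ n, ∀ v : EuclideanSpace ℝ (Fin m), A v = f →
      ‖T (vn n) - g‖ ^ 2 + γ * ∑ i, Wpot r p (εseq n) (vn n i) ≤
        ‖T v - g‖ ^ 2 + γ * ∑ i, Wpot r p (εseq n) (v i))
    (vstar : EuclideanSpace ℝ (Fin m))
    (hconv : Filter.Tendsto vn Filter.atTop (nhds vstar)) :
    A vstar = f ∧
      ∀ v : EuclideanSpace ℝ (Fin m), A v = f →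
        ‖T vstar - g‖ ^ 2 + γ * ∑ i, min (|vstar i| ^ p) (r ^ p) ≤
          ‖T v - g‖ ^ 2 + γ * ∑ i, min (|v i| ^ p) (r ^ p) :=
  statement9_general r p hp m T A g f γ hγ εseq hεpos hεlt hεto0 vn hvnf hvnmin vstar hconv
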